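/- arXiv:1404.2133 — 3 statements merged into one kernel-verified Lean document; each statement's English description precedes it below -/
import Mathlib

section
/- The drift function F^m of the rescaled Moran model coincides with the Eigen vector field on lattice points: for every m ≥ 1 and every x in (1/m)·P^m_N (i.e., mx is a vector of naturals summing to m), and every i in {1,…,N}, F^m_i(x) := λm · Σ_{z ∈ P^m_N} (z_i/m − x_i) p(mx, z) equals Σ_{j=1}^N f_j Q_{ji} x_j − x_i Σ_{j=1}^N f_j x_j. -/
open Finset

/-- The population obtained from `z` by removing one individual of type `i`
and adding one of type `j`. -/
def moranStep (N : ℕ) (z : Fin N → ℕ) (i j : Fin N) : Fin N → ℕ :=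
  fun k => z k - (if k = i then 1 else 0) + (if k = j then 1 else 0)

/-- The off-diagonal Moran transition probability
`p(z, z - e_i + e_j) = (z_i/m) (1/(λ m)) ∑_k f_k Q_{kj} z_k`. -/
noncomputable def moranRate (N m : ℕ) (f : Fin N → ℝ) (Q : Fin N → Fin N → ℝ)
    (lam : ℝ) (z : Fin N → ℕ) (i j : Fin N) : ℝ :=
  ((z i : ℝ) / m) * (1 / (lam * m)) * ∑ k, f k * Q k j * (z k : ℝ)

/-- The Moran transition matrix: `p(z, z - e_i + e_j)` is `moranRate` for `i ≠ j`,
other off-diagonal entries vanish, and the diagonal makes rows sum to one. -/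
noncomputable def moranP (N m : ℕ) (f : Fin N → ℝ) (Q : Fin N → Fin N → ℝ)
    (lam : ℝ) (z z' : Fin N → ℕ) : ℝ :=
  if z' = z then
    1 - ∑ i, ∑ j ∈ Finset.univ.erase i, moranRate N m f Q lam z i j
  else
    ∑ i, ∑ j ∈ Finset.univ.erase i,
      if z' = moranStep N z i j then moranRate N m f Q lam z i j else 0

/-!
The Moran kernel is a pure-jump kernel: from `z` it moves to `z - e_a + e_b` (`a ≠ b`) with
probability `p(z, z - e_a + e_b)` and otherwise stays put. Staying contributes no increment, and
every move of positive probability (`z_a > 0`) stays in `P^m_N`, so the expected increment of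
`z_i / m` is the net flow into `i`, `(∑_a p_{ai} - ∑_b p_{ib}) / m`. The inflow evaluates through
`∑_a z_a = m` and the outflow through `∑_b Q_{kb} = 1`; multiplying by `λm` gives the Eigen field.
-/

section JumpKernel

variable {S ι : Type*} [DecidableEq S]

noncomputable def jumpKernel (s : Finset ι) (r : ι → ℝ) (t : ι → S) (z z' : S) : ℝ :=
  if z' = z then 1 - ∑ k ∈ s, r k else ∑ k ∈ s, if z' = t k then r k else 0

theorem sum_sub_mul_jumpKernel (T : Finset S) (s : Finset ι) (r : ι → ℝ) (t : ι → S)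
    (z : S) (g : S → ℝ) (ht : ∀ k ∈ s, r k ≠ 0 → t k ∈ T) :
    ∑ z' ∈ T, (g z' - g z) * jumpKernel s r t z z' = ∑ k ∈ s, r k * (g (t k) - g z) := by
  have hterm : ∀ z', (g z' - g z) * jumpKernel s r t z z'
      = ∑ k ∈ s, if z' = t k then r k * (g z' - g z) else 0 := by
    intro z'
    by_cases hz : z' = z
    · simp [hz]
    · simp only [jumpKernel, if_neg hz, mul_sum]
      exact sum_congr rfl fun k _ => by split_ifs <;> ring
  rw [sum_congr rfl fun z' _ => hterm z', sum_comm]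
  refine sum_congr rfl fun k hk => ?_
  rw [sum_ite_eq' T (t k) fun z' => r k * (g z' - g z)]
  by_cases hr : r k = 0
  · simp [hr]
  · simp [ht k hk hr]

end JumpKernel

theorem sum_sum_erase_mul_indicator_sub {α : Type*} [Fintype α] [DecidableEq α]
    (r : α → α → ℝ) (i : α) :
    ∑ a, ∑ b ∈ univ.erase a, r a b * ((if b = i then 1 else 0) - (if a = i then 1 else 0))
      = ∑ a, r a i - ∑ b, r i b := by
  have hrow : ∀ a, ∑ b ∈ univ.erase a,
      r a b * ((if b = i then 1 else 0) - (if a = i then 1 else 0))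
        = r a i - if a = i then ∑ b, r a b else 0 := by
    intro a
    rw [sum_erase _ (by simp), sum_congr rfl fun b _ => mul_sub _ _ _,
      sum_sub_distrib]
    simp only [mul_ite, mul_one, mul_zero, sum_ite_eq', mem_univ, if_true,
      sum_ite_irrel, sum_const_zero]
  simp only [sum_congr rfl fun a _ => hrow a, sum_sub_distrib,
    sum_ite_eq', mem_univ, if_true]

section Moran

variable {N m : ℕ} (f : Fin N → ℝ) (Q : Fin N → Fin N → ℝ) (lam : ℝ) {z : Fin N → ℕ}

theorem moranP_eq_jumpKernel :
    moranP N m f Q lam z = jumpKernel (univ.sigma fun a => univ.erase a)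
      (fun p => moranRate N m f Q lam z p.1 p.2) (fun p => moranStep N z p.1 p.2) z := by
  funext z'
  simp only [moranP, jumpKernel, sum_sigma]

theorem moranRate_eq_zero (a b : Fin N) (ha : z a = 0) : moranRate N m f Q lam z a b = 0 := by
  simp [moranRate, ha]

theorem cast_moranStep_apply {a : Fin N} (ha : z a ≠ 0) (b k : Fin N) :
    (moranStep N z a b k : ℝ) = z k - (if k = a then 1 else 0) + (if k = b then 1 else 0) := by
  have : (if k = a then 1 else 0) ≤ z k := by
    split_ifs with h
    · subst h; omega
    · omega
  simp only [moranStep]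
  push_cast [Nat.cast_sub this]
  split_ifs <;> simp

theorem moranStep_mem_antidiagonalTuple (hz : ∑ k, z k = m) {a : Fin N} (ha : z a ≠ 0)
    (b : Fin N) : moranStep N z a b ∈ Finset.Nat.antidiagonalTuple N m := by
  rw [Finset.Nat.mem_antidiagonalTuple]
  have hR : (∑ k, (moranStep N z a b k : ℝ)) = m := by
    simp only [cast_moranStep_apply ha, sum_add_distrib, sum_sub_distrib]
    simp [← Nat.cast_sum, hz]
  exact_mod_cast hR

theorem sum_moranRate_apply_right (hz : ∑ k, z k = m) (hm : m ≠ 0) (hlam : lam ≠ 0)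
    (i : Fin N) :
    ∑ a, moranRate N m f Q lam z a i = (∑ k, f k * Q k i * (z k : ℝ)) / (lam * m) := by
  have hzR : ∑ a, (z a : ℝ) = m := by exact_mod_cast hz
  simp only [moranRate, ← sum_mul, ← sum_div, hzR]
  field_simp

theorem sum_moranRate_apply_left (hQ1 : ∀ k, ∑ j, Q k j = 1) (i : Fin N) :
    ∑ b, moranRate N m f Q lam z i b
      = ((z i : ℝ) / m) * (1 / (lam * m)) * ∑ k, f k * (z k : ℝ) := by
  have hflux : ∑ b, ∑ k, f k * Q k b * (z k : ℝ) = ∑ k, f k * (z k : ℝ) := by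
    rw [sum_comm]
    refine sum_congr rfl fun k _ => ?_
    simp only [← sum_mul, ← mul_sum, hQ1 k, mul_one]
  simp only [moranRate, ← mul_sum, hflux]

end Moran

theorem moran_drift_eq_eigen_field_general
    (N : ℕ) (f : Fin N → ℝ)
    (Q : Fin N → Fin N → ℝ) (hQ1 : ∀ i, ∑ j, Q i j = 1)
    (lam : ℝ) (hlam0 : 0 < lam)
    (m : ℕ) (hm : 1 ≤ m) (z : Fin N → ℕ) (hz : ∑ i, z i = m) (i : Fin N) :
    lam * m * ∑ z' ∈ Finset.Nat.antidiagonalTuple N m,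
        ((z' i : ℝ) / m - (z i : ℝ) / m) * moranP N m f Q lam z z'
      = ∑ j, f j * Q j i * ((z j : ℝ) / m)
        - ((z i : ℝ) / m) * ∑ j, f j * ((z j : ℝ) / m) := by
  have hm0 : m ≠ 0 := by omega
  have hincr : ∀ a b, moranRate N m f Q lam z a b * ((moranStep N z a b i : ℝ) / m - z i / m)
      = moranRate N m f Q lam z a b
          * ((if b = i then 1 else 0) - (if a = i then 1 else 0)) / m := by
    intro a b
    by_cases ha : z a = 0
    · simp [moranRate_eq_zero f Q lam a b ha]
    · simp only [cast_moranStep_apply ha, eq_comm (a := i)]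
      ring
  rw [moranP_eq_jumpKernel, sum_sub_mul_jumpKernel _ _ _ _ z fun w => (w i : ℝ) / m]
  · simp only [sum_sigma, hincr, ← sum_div, sum_sum_erase_mul_indicator_sub,
      sum_moranRate_apply_right f Q lam hz hm0 hlam0.ne', sum_moranRate_apply_left f Q lam hQ1,
      mul_div_assoc', ← sum_div]
    field_simp
  · rintro ⟨a, b⟩ - hr
    exact moranStep_mem_antidiagonalTuple hz (fun ha => hr (moranRate_eq_zero f Q lam a b ha)) b

/-- The drift function `F^m` of the rescaled Moran model coincides with the Eigen
vector field on the lattice points `(1/m)·P^m_N`. -/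
theorem moran_drift_eq_eigen_field
    (N : ℕ) (hN : 1 ≤ N) (f : Fin N → ℝ) (hf : ∀ i, 0 ≤ f i)
    (Q : Fin N → Fin N → ℝ) (hQ0 : ∀ i j, 0 ≤ Q i j) (hQ1 : ∀ i, ∑ j, Q i j = 1)
    (lam : ℝ) (hlam : ∀ i, f i ≤ lam) (hlam0 : 0 < lam)
    (m : ℕ) (hm : 1 ≤ m) (z : Fin N → ℕ) (hz : ∑ i, z i = m) (i : Fin N) :
    lam * m * ∑ z' ∈ Finset.Nat.antidiagonalTuple N m,
        ((z' i : ℝ) / m - (z i : ℝ) / m) * moranP N m f Q lam z z'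
      = ∑ j, f j * Q j i * ((z j : ℝ) / m)
        - ((z i : ℝ) / m) * ∑ j, f j * ((z j : ℝ) / m) :=
  moran_drift_eq_eigen_field_general N f Q hQ1 lam hlam0 m hm z hz i
end

section
/- The unit simplex is forward invariant under the Eigen flow: if x : [0,∞) → ℝ^N solves x'(t) = F(x(t)) with F_i(x) = Σ_j f_j Q_{ji} x_j − x_i Σ_j f_j x_j, Q row-stochastic with nonnegative entries, f_j ≥ 0, and x(0) ∈ S_N, then x(t) ∈ S_N for all t ≥ 0. -/
/-!
Write `φ(t) = ∑ⱼ fⱼ xⱼ(t)`; it is continuous, hence bounded on `[0, t]`, and the flow reads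
`xᵢ' = ∑ⱼ fⱼ Qⱼᵢ xⱼ - φ xᵢ`, a linear system whose off-diagonal coefficients are nonnegative.

Since `Q` is row-stochastic, `y = ∑ᵢ xᵢ - 1` solves `y' = -φ y` with `y(0) = 0`, so `y ≡ 0`
by Grönwall. For nonnegativity, the squared distance `W = ∑ᵢ min(xᵢ, 0)²` to the orthant is
differentiable, and `xⱼ ≥ min(xⱼ, 0)` together with `fⱼ Qⱼᵢ ≥ 0` gives `W' ≤ K W`; as
`W(0) = 0`, Grönwall again gives `W ≡ 0`.
-/

open Finset Set Filter Topology

section LinearFlow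

variable {ι : Type*} [Fintype ι]

lemma min_zero_mul_self (a : ℝ) : min a 0 * a = min a 0 ^ 2 := by
  rcases le_total a 0 with h | h <;> simp [h, sq]

lemma hasDerivAt_min_zero_sq (a : ℝ) :
    HasDerivAt (fun y : ℝ => min y 0 ^ 2) (2 * min a 0) a := by
  rcases lt_trichotomy a 0 with ha | rfl | ha
  · have hev : (fun y : ℝ => min y 0 ^ 2) =ᶠ[𝓝 a] fun y => y ^ 2 := by
      filter_upwards [Iio_mem_nhds ha] with y hy
      rw [min_eq_left (le_of_lt hy)]
    simpa [min_eq_left ha.le] using (hasDerivAt_pow 2 a).congr_of_eventuallyEq hev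
  · have hsq : (fun y : ℝ => min y 0 ^ 2) =O[𝓝 0] fun y => y ^ 2 :=
      Asymptotics.IsBigO.of_bound 1 (Eventually.of_forall fun y => by
        rcases le_total y 0 with h | h <;> simp [h])
    rw [hasDerivAt_iff_isLittleO_nhds_zero]
    simpa using hsq.trans_isLittleO (Asymptotics.isLittleO_pow_id one_lt_two)
  · have hev : (fun y : ℝ => min y 0 ^ 2) =ᶠ[𝓝 a] fun _ => 0 := by
      filter_upwards [Ioi_mem_nhds ha] with y hy
      rw [min_eq_right (le_of_lt hy), sq, mul_zero]
    simpa [min_eq_right ha.le] using (hasDerivAt_const a (0 : ℝ)).congr_of_eventuallyEq hev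

def sqDistToOrthant (v : ι → ℝ) : ℝ := ∑ i, min (v i) 0 ^ 2

lemma sq_min_zero_le_sqDistToOrthant (v : ι → ℝ) (i : ι) :
    min (v i) 0 ^ 2 ≤ sqDistToOrthant v :=
  single_le_sum (fun j _ => sq_nonneg (min (v j) 0)) (mem_univ i)

lemma nonneg_of_sqDistToOrthant_nonpos {v : ι → ℝ} (hv : sqDistToOrthant v ≤ 0) (i : ι) :
    0 ≤ v i := by
  have : min (v i) 0 ^ 2 ≤ 0 := (sq_min_zero_le_sqDistToOrthant v i).trans hv
  exact min_eq_right_iff.mp (pow_eq_zero_iff two_ne_zero |>.mp (le_antisymm this (sq_nonneg _)))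

lemma sqDistToOrthant_of_nonneg {v : ι → ℝ} (hv : ∀ i, 0 ≤ v i) : sqDistToOrthant v = 0 :=
  sum_eq_zero fun i _ => by simp [hv i]

lemma HasDerivWithinAt.sqDistToOrthant {x : ℝ → ι → ℝ} {x' : ι → ℝ} {S : Set ℝ} {s : ℝ}
    (hx : ∀ i, HasDerivWithinAt (fun s => x s i) (x' i) S s) :
    HasDerivWithinAt (fun s => sqDistToOrthant (x s)) (∑ i, 2 * min (x s i) 0 * x' i) S s :=
  HasDerivWithinAt.fun_sum fun i _ =>
    (hasDerivAt_min_zero_sq (x s i)).comp_hasDerivWithinAt (h := fun s => x s i) s (hx i)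

lemma sum_min_zero_mul_linear_le {B : ι → ι → ℝ} (hB : ∀ i j, 0 ≤ B i j) {c : ι → ℝ} {C : ℝ}
    (hc : ∀ i, c i ≤ C) (v : ι → ℝ) :
    ∑ i, 2 * min (v i) 0 * (∑ j, B i j * v j + c i * v i)
      ≤ (2 * ∑ i, ∑ j, B i j + 2 * C) * sqDistToOrthant v := by
  set W := sqDistToOrthant v
  have hoff : ∀ i j, 2 * min (v i) 0 * (B i j * v j) ≤ 2 * B i j * W := fun i j => by
    have hmv : min (v i) 0 * v j ≤ min (v i) 0 * min (v j) 0 :=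
      mul_le_mul_of_nonpos_left (min_le_left _ _) (min_le_right _ _)
    have hmm : min (v i) 0 * min (v j) 0 ≤ W := by
      nlinarith [sq_nonneg (min (v i) 0 - min (v j) 0), sq_min_zero_le_sqDistToOrthant v i,
        sq_min_zero_le_sqDistToOrthant v j]
    calc 2 * min (v i) 0 * (B i j * v j) = 2 * B i j * (min (v i) 0 * v j) := by ring
      _ ≤ 2 * B i j * W := mul_le_mul_of_nonneg_left (hmv.trans hmm) (by linarith [hB i j])
  have hdiag : ∀ i, 2 * min (v i) 0 * (c i * v i) ≤ 2 * C * min (v i) 0 ^ 2 := fun i => by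
    rw [show 2 * min (v i) 0 * (c i * v i) = 2 * c i * (min (v i) 0 * v i) by ring,
      min_zero_mul_self]
    gcongr
    exact hc i
  calc ∑ i, 2 * min (v i) 0 * (∑ j, B i j * v j + c i * v i)
      = ∑ i, ∑ j, 2 * min (v i) 0 * (B i j * v j) + ∑ i, 2 * min (v i) 0 * (c i * v i) := by
        simp only [mul_add, mul_sum, sum_add_distrib]
    _ ≤ ∑ i, ∑ j, 2 * B i j * W + ∑ i, 2 * C * min (v i) 0 ^ 2 :=
        add_le_add (sum_le_sum fun i _ => sum_le_sum fun j _ => hoff i j)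
          (sum_le_sum fun i _ => hdiag i)
    _ = (2 * ∑ i, ∑ j, B i j + 2 * C) * W := by
        simp only [← sum_mul, ← mul_sum, W, sqDistToOrthant]; ring

theorem nonneg_of_hasDerivWithinAt_linear {x : ℝ → ι → ℝ} {B : ι → ι → ℝ} {c : ℝ → ι → ℝ}
    {a t C : ℝ} (hB : ∀ i j, 0 ≤ B i j)
    (hx : ∀ s ≥ a, ∀ i, HasDerivWithinAt (fun s => x s i)
      (∑ j, B i j * x s j + c s i * x s i) (Ici a) s)
    (hc : ∀ s ∈ Ico a t, ∀ i, c s i ≤ C) (ha : ∀ i, 0 ≤ x a i) (ht : a ≤ t) (i : ι) :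
    0 ≤ x t i := by
  have hW : ∀ s ≥ a, HasDerivWithinAt (fun s => sqDistToOrthant (x s))
      (∑ i, 2 * min (x s i) 0 * (∑ j, B i j * x s j + c s i * x s i)) (Ici a) s :=
    fun s hs => HasDerivWithinAt.sqDistToOrthant (hx s hs)
  have hWt := le_gronwallBound_of_liminf_deriv_right_le
    (fun s hs => (hW s hs.1).continuousWithinAt.mono Icc_subset_Ici_self)
    (fun s hs _ hr => ((hW s hs.1).mono (Ici_subset_Ici.mpr hs.1)).liminf_right_slope_le hr)
    (sqDistToOrthant_of_nonneg ha).le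
    (fun s hs => (sum_min_zero_mul_linear_le hB (hc s hs) (x s)).trans_eq (add_zero _).symm)
    t ⟨ht, le_rfl⟩
  rw [gronwallBound_ε0_δ0] at hWt
  exact nonneg_of_sqDistToOrthant_nonpos hWt i

def eigenField (f : ι → ℝ) (Q : ι → ι → ℝ) (v : ι → ℝ) (i : ι) : ℝ :=
  ∑ j, f j * Q j i * v j - v i * ∑ j, f j * v j

lemma sum_eigenField {Q : ι → ι → ℝ} (hQ1 : ∀ i, ∑ j, Q i j = 1) (f v : ι → ℝ) :
    ∑ i, eigenField f Q v i = -(∑ j, f j * v j) * (∑ i, v i - 1) := by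
  have hmass : ∑ i, ∑ j, f j * Q j i * v j = ∑ j, f j * v j := by
    rw [sum_comm]
    refine sum_congr rfl fun j _ => ?_
    rw [← mul_one (f j * v j), ← hQ1 j, mul_sum]
    exact sum_congr rfl fun i _ => by ring
  simp only [eigenField, sum_sub_distrib, hmass, ← sum_mul]
  ring

end LinearFlow

theorem eigen_flow_simplex_invariant_general
    (N : ℕ) (f : Fin N → ℝ) (hf : ∀ j, 0 ≤ f j)
    (Q : Fin N → Fin N → ℝ) (hQ0 : ∀ i j, 0 ≤ Q i j) (hQ1 : ∀ i, ∑ j, Q i j = 1)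
    (x : ℝ → Fin N → ℝ)
    (hderiv : ∀ t ≥ (0 : ℝ), ∀ i, HasDerivWithinAt (fun s => x s i)
      (∑ j, f j * Q j i * x t j - x t i * ∑ j, f j * x t j) (Set.Ici 0) t)
    (h0 : (∀ i, 0 ≤ x 0 i) ∧ ∑ i, x 0 i = 1) :
    ∀ t ≥ (0 : ℝ), (∀ i, 0 ≤ x t i) ∧ ∑ i, x t i = 1 := by
  intro t ht
  set φ : ℝ → ℝ := fun s => ∑ j, f j * x s j
  have hφ : ContinuousOn φ (Icc 0 t) := continuousOn_finsetSum _ fun j _ =>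
    continuousOn_const.mul fun s hs =>
      (hderiv s hs.1 j).continuousWithinAt.mono Icc_subset_Ici_self
  obtain ⟨C, hC⟩ := isCompact_Icc.exists_bound_of_continuousOn hφ
  have hφC : ∀ s ∈ Ico 0 t, |φ s| ≤ C := fun s hs => hC s (Ico_subset_Icc_self hs)
  refine ⟨nonneg_of_hasDerivWithinAt_linear (B := fun i j => f j * Q j i) (c := fun s _ => -φ s)
    (fun i j => mul_nonneg (hf j) (hQ0 j i)) (fun s hs i => (hderiv s hs i).congr_deriv (by ring))
    (fun s hs _ => (neg_le_abs (φ s)).trans (hφC s hs)) h0.1 ht, ?_⟩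
  have hmass : ∀ s ≥ 0, HasDerivWithinAt (fun s => ∑ i, x s i - 1)
      (-φ s * (∑ i, x s i - 1)) (Ici 0) s := fun s hs =>
    (sum_eigenField hQ1 f (x s) ▸ HasDerivWithinAt.fun_sum fun i _ => hderiv s hs i).sub_const 1
  have hy := eq_zero_of_abs_deriv_le_mul_abs_self_of_eq_zero_right (K := C)
    (fun s hs => (hmass s hs.1).continuousWithinAt.mono Icc_subset_Ici_self)
    (fun s hs => (hmass s hs.1).mono (Ici_subset_Ici.mpr hs.1)) (sub_eq_zero.mpr h0.2)
    (fun s hs => by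
      rw [norm_mul, norm_neg]
      exact mul_le_mul_of_nonneg_right (hφC s hs) (norm_nonneg _))
    t ⟨ht, le_rfl⟩
  exact sub_eq_zero.mp hy

/-- The unit simplex is forward invariant under the Eigen flow. -/
theorem eigen_flow_simplex_invariant
    (N : ℕ) (hN : 1 ≤ N) (f : Fin N → ℝ) (hf : ∀ j, 0 ≤ f j)
    (Q : Fin N → Fin N → ℝ) (hQ0 : ∀ i j, 0 ≤ Q i j) (hQ1 : ∀ i, ∑ j, Q i j = 1)
    (x : ℝ → Fin N → ℝ)
    (hderiv : ∀ t ≥ (0 : ℝ), ∀ i, HasDerivWithinAt (fun s => x s i)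
      (∑ j, f j * Q j i * x t j - x t i * ∑ j, f j * x t j) (Set.Ici 0) t)
    (h0 : (∀ i, 0 ≤ x 0 i) ∧ ∑ i, x 0 i = 1) :
    ∀ t ≥ (0 : ℝ), (∀ i, 0 ≤ x t i) ∧ ∑ i, x t i = 1 :=
  eigen_flow_simplex_invariant_general N f hf Q hQ0 hQ1 x hderiv h0
end

section
/- Existence and uniqueness for Eigen's model: for every x^0 ∈ S_N there exists a unique solution x : [0,∞) → ℝ^N of the system x_i'(t) = Σ_{j=1}^N f_j Q_{ji} x_j(t) − x_i(t) Σ_{j=1}^N f_j x_j(t), 1 ≤ i ≤ N, with x(0) = x^0, and the solution remains in S_N. -/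
/-!
Write `(B v)ᵢ = ∑ⱼ fⱼ Qⱼᵢ vⱼ`. Since `Q` is row-stochastic, `∑ᵢ (B v)ᵢ = ∑ⱼ fⱼ vⱼ`, so the
quadratic term of Eigen's equations is exactly what normalising a solution of the linear system
`w' = B w` produces: `x = w / ∑ᵢ wᵢ` solves Eigen's equations, and `w(t) = exp(tB) x⁰` gives a
solution. As `B` maps the nonnegative orthant into itself, so does `exp(tB)` for `t ≥ 0`; hence
the mass `∑ᵢ wᵢ` is nondecreasing, stays `≥ 1`, and `x` stays in the simplex. Uniqueness holds
because the vector field is polynomial, hence Lipschitz on the bounded set that two solutions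
sweep out on `[0, t]`.
-/

open Set Finset

section

variable {E : Type*} [NormedAddCommGroup E] [NormedSpace ℝ E]

theorem hasDerivAt_exp_smul_apply [CompleteSpace E] (A : E →L[ℝ] E) (v : E) (t : ℝ) :
    HasDerivAt (fun s : ℝ => NormedSpace.exp (s • A) v) (A (NormedSpace.exp (t • A) v)) t :=
  (ContinuousLinearMap.apply ℝ E v).hasFDerivAt.comp_hasDerivAt t
    (hasDerivAt_exp_smul_const' (𝕂 := ℝ) A t)

theorem HasDerivAt.inv_map_smul {A : E →L[ℝ] E} {σ : E →L[ℝ] ℝ} {w : ℝ → E} {t : ℝ}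
    (hw : HasDerivAt w (A (w t)) t) (hσ : σ (w t) ≠ 0) :
    HasDerivAt (fun s => (σ (w s))⁻¹ • w s)
      (A ((σ (w t))⁻¹ • w t) - σ (A ((σ (w t))⁻¹ • w t)) • (σ (w t))⁻¹ • w t) t := by
  have hσw : HasDerivAt (fun s => σ (w s)) (σ (A (w t))) t :=
    σ.hasFDerivAt.comp_hasDerivAt t hw
  convert (hσw.fun_inv hσ).fun_smul hw using 1
  rw [map_smul, map_smul, smul_eq_mul, smul_smul, sub_eq_add_neg, ← neg_smul]
  congr 2
  field_simp

theorem ODE_solution_unique_Ici_of_contDiff [ProperSpace E] {F : E → E} (hF : ContDiff ℝ 1 F)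
    {x y : ℝ → E} {a : ℝ}
    (hx : ∀ t ≥ a, HasDerivWithinAt x (F (x t)) (Ici a) t)
    (hy : ∀ t ≥ a, HasDerivWithinAt y (F (y t)) (Ici a) t) (ha : x a = y a) :
    EqOn x y (Ici a) := by
  intro t ht
  have hcont : ∀ z : ℝ → E, (∀ t ≥ a, HasDerivWithinAt z (F (z t)) (Ici a) t) →
      ContinuousOn z (Icc a t) := fun z hz u hu =>
    (hz u hu.1).continuousWithinAt.mono Icc_subset_Ici_self
  obtain ⟨Rx, hRx⟩ := isCompact_Icc.exists_bound_of_continuousOn (hcont x hx)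
  obtain ⟨Ry, hRy⟩ := isCompact_Icc.exists_bound_of_continuousOn (hcont y hy)
  obtain ⟨K, hK⟩ :=
    (hF.contDiffOn (s := Metric.closedBall 0 (max Rx Ry))).exists_lipschitzOnWith one_ne_zero
      (convex_closedBall 0 _) (isCompact_closedBall 0 _)
  have hball : ∀ z : ℝ → E, (∀ u ∈ Icc a t, ‖z u‖ ≤ max Rx Ry) →
      ∀ u ∈ Ico a t, z u ∈ Metric.closedBall 0 (max Rx Ry) := fun z hz u hu =>
    mem_closedBall_zero_iff.2 (hz u (Ico_subset_Icc_self hu))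
  have hderiv : ∀ z : ℝ → E, (∀ t ≥ a, HasDerivWithinAt z (F (z t)) (Ici a) t) →
      ∀ u ∈ Ico a t, HasDerivWithinAt z (F (z u)) (Ici u) u := fun z hz u hu =>
    (hz u hu.1).mono (Ici_subset_Ici.2 hu.1)
  exact ODE_solution_unique_of_mem_Icc_right (v := fun _ => F) (fun _ _ => hK)
    (hcont x hx) (hderiv x hx) (hball x fun u hu => (hRx u hu).trans (le_max_left _ _))
    (hcont y hy) (hderiv y hy) (hball y fun u hu => (hRy u hu).trans (le_max_right _ _))
    ha ⟨ht, le_rfl⟩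

end

section

variable {E : Type*} [NormedAddCommGroup E] [NormedSpace ℝ E] [CompleteSpace E]
  [PartialOrder E] [IsOrderedAddMonoid E] [OrderClosedTopology E] [PosSMulMono ℝ E]

theorem exp_smul_apply_nonneg {A : E →L[ℝ] E} (hA : ∀ v, 0 ≤ v → 0 ≤ A v)
    {t : ℝ} (ht : 0 ≤ t) {v : E} (hv : 0 ≤ v) : 0 ≤ NormedSpace.exp (t • A) v := by
  have hpow : ∀ n : ℕ, 0 ≤ (A ^ n) v := by
    intro n
    induction n with
    | zero => simpa using hv
    | succ n ih => rw [pow_succ']; exact hA _ ih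
  rw [NormedSpace.exp_eq_tsum ℝ, ← ContinuousLinearMap.apply_apply v,
    (ContinuousLinearMap.apply ℝ E v).map_tsum (NormedSpace.expSeries_summable' _)]
  refine tsum_nonneg fun n => ?_
  simp only [ContinuousLinearMap.apply_apply, smul_pow, smul_apply]
  exact smul_nonneg (by positivity) (smul_nonneg (by positivity) (hpow n))

end

namespace Eigen

variable {ι : Type*} [Fintype ι] (f : ι → ℝ) (Q : ι → ι → ℝ)

noncomputable def selectionMutation : (ι → ℝ) →L[ℝ] (ι → ℝ) :=
  LinearMap.toContinuousLinearMap (Matrix.of fun i j => f j * Q j i).mulVecLin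

noncomputable def totalMass : (ι → ℝ) →L[ℝ] ℝ := ∑ i, ContinuousLinearMap.proj i

def field (v : ι → ℝ) : ι → ℝ := fun i => ∑ j, f j * Q j i * v j - v i * ∑ j, f j * v j

noncomputable def linearFlow (x0 : ι → ℝ) (t : ℝ) : ι → ℝ :=
  NormedSpace.exp (t • selectionMutation f Q) x0

noncomputable def solution (x0 : ι → ℝ) (t : ℝ) : ι → ℝ :=
  (totalMass (linearFlow f Q x0 t))⁻¹ • linearFlow f Q x0 t

variable {f Q}

@[simp]
theorem selectionMutation_apply (v : ι → ℝ) (i : ι) :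
    selectionMutation f Q v i = ∑ j, f j * Q j i * v j := by
  simp [selectionMutation, Matrix.mulVec, dotProduct, mul_comm]

@[simp]
theorem totalMass_apply (v : ι → ℝ) : totalMass v = ∑ i, v i := by
  simp [totalMass]

theorem selectionMutation_nonneg (hf : 0 ≤ f) (hQ : 0 ≤ Q) {v : ι → ℝ} (hv : 0 ≤ v) :
    0 ≤ selectionMutation f Q v := fun i => by
  rw [Pi.zero_apply, selectionMutation_apply]
  exact sum_nonneg fun j _ => mul_nonneg (mul_nonneg (hf j) (hQ j i)) (hv j)

theorem totalMass_selectionMutation (hQ : ∀ j, ∑ i, Q j i = 1) (v : ι → ℝ) :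
    totalMass (selectionMutation f Q v) = ∑ j, f j * v j := by
  simp only [totalMass_apply, selectionMutation_apply]
  rw [sum_comm]
  refine sum_congr rfl fun j _ => ?_
  rw [← sum_mul, ← mul_sum, hQ j, mul_one]

theorem field_eq (hQ : ∀ j, ∑ i, Q j i = 1) (v : ι → ℝ) :
    field f Q v = selectionMutation f Q v - totalMass (selectionMutation f Q v) • v := by
  ext i
  simp only [field, totalMass_selectionMutation hQ, Pi.sub_apply, selectionMutation_apply,
    Pi.smul_apply, smul_eq_mul, mul_comm (v i)]

theorem contDiff_field : ContDiff ℝ 1 (field f Q) := by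
  unfold field
  fun_prop

theorem linearFlow_nonneg (hf : 0 ≤ f) (hQ : 0 ≤ Q) {x0 : ι → ℝ} (hx0 : 0 ≤ x0) {t : ℝ}
    (ht : 0 ≤ t) : 0 ≤ linearFlow f Q x0 t :=
  exp_smul_apply_nonneg (fun _ => selectionMutation_nonneg hf hQ) ht hx0

theorem hasDerivAt_linearFlow (x0 : ι → ℝ) (t : ℝ) :
    HasDerivAt (linearFlow f Q x0) (selectionMutation f Q (linearFlow f Q x0 t)) t :=
  hasDerivAt_exp_smul_apply _ x0 t

theorem totalMass_linearFlow_mono (hf : 0 ≤ f) (hQ : 0 ≤ Q) {x0 : ι → ℝ} (hx0 : 0 ≤ x0) :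
    MonotoneOn (fun t => totalMass (linearFlow f Q x0 t)) (Ici 0) := by
  have hderiv : ∀ t, HasDerivAt (fun t => totalMass (linearFlow f Q x0 t))
      (totalMass (selectionMutation f Q (linearFlow f Q x0 t))) t := fun t =>
    totalMass.hasFDerivAt.comp_hasDerivAt t (hasDerivAt_linearFlow x0 t)
  refine monotoneOn_of_hasDerivWithinAt_nonneg (convex_Ici 0)
    (fun t _ => (hderiv t).continuousAt.continuousWithinAt)
    (fun t _ => (hderiv t).hasDerivWithinAt) fun t ht => ?_
  rw [interior_Ici] at ht
  rw [totalMass_apply]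
  exact sum_nonneg fun i _ =>
    selectionMutation_nonneg hf hQ (linearFlow_nonneg hf hQ hx0 ht.le) i

theorem one_le_totalMass_linearFlow (hf : 0 ≤ f) (hQ : 0 ≤ Q) {x0 : ι → ℝ}
    (hx0 : x0 ∈ stdSimplex ℝ ι) {t : ℝ} (ht : 0 ≤ t) :
    1 ≤ totalMass (linearFlow f Q x0 t) := by
  have h0 : totalMass (linearFlow f Q x0 0) = 1 := by
    simp [linearFlow, NormedSpace.exp_zero, hx0.2]
  exact h0 ▸ totalMass_linearFlow_mono hf hQ hx0.1 self_mem_Ici ht ht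

theorem solution_zero {x0 : ι → ℝ} (hx0 : ∑ i, x0 i = 1) : solution f Q x0 0 = x0 := by
  simp [solution, linearFlow, NormedSpace.exp_zero, hx0]

theorem solution_mem_stdSimplex (hf : 0 ≤ f) (hQ : 0 ≤ Q) {x0 : ι → ℝ}
    (hx0 : x0 ∈ stdSimplex ℝ ι) {t : ℝ} (ht : 0 ≤ t) :
    solution f Q x0 t ∈ stdSimplex ℝ ι := by
  have hmass := one_le_totalMass_linearFlow hf hQ hx0 ht
  refine ⟨fun i => ?_, ?_⟩
  · exact mul_nonneg (by positivity) (linearFlow_nonneg hf hQ hx0.1 ht i)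
  · rw [← totalMass_apply, solution, map_smul, smul_eq_mul, inv_mul_cancel₀ (by positivity)]

theorem hasDerivAt_solution (hf : 0 ≤ f) (hQ0 : 0 ≤ Q) (hQ1 : ∀ j, ∑ i, Q j i = 1)
    {x0 : ι → ℝ} (hx0 : x0 ∈ stdSimplex ℝ ι) {t : ℝ} (ht : 0 ≤ t) :
    HasDerivAt (solution f Q x0) (field f Q (solution f Q x0 t)) t := by
  rw [field_eq hQ1]
  exact (hasDerivAt_linearFlow x0 t).inv_map_smul
    (by linarith [one_le_totalMass_linearFlow hf hQ0 hx0 ht])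

end Eigen

theorem eigen_model_existence_uniqueness_general
    (N : ℕ) (f : Fin N → ℝ) (hf : ∀ j, 0 ≤ f j)
    (Q : Fin N → Fin N → ℝ) (hQ0 : ∀ i j, 0 ≤ Q i j) (hQ1 : ∀ i, ∑ j, Q i j = 1)
    (x0 : Fin N → ℝ) (hx0 : (∀ i, 0 ≤ x0 i) ∧ ∑ i, x0 i = 1) :
    ∃ x : ℝ → Fin N → ℝ,
      (x 0 = x0 ∧
       (∀ t ≥ (0 : ℝ), ∀ i, HasDerivWithinAt (fun s => x s i)
         (∑ j, f j * Q j i * x t j - x t i * ∑ j, f j * x t j) (Set.Ici 0) t) ∧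
       (∀ t ≥ (0 : ℝ), (∀ i, 0 ≤ x t i) ∧ ∑ i, x t i = 1)) ∧
      (∀ y : ℝ → Fin N → ℝ,
        y 0 = x0 →
        (∀ t ≥ (0 : ℝ), ∀ i, HasDerivWithinAt (fun s => y s i)
          (∑ j, f j * Q j i * y t j - y t i * ∑ j, f j * y t j) (Set.Ici 0) t) →
        ∀ t ≥ (0 : ℝ), y t = x t) := by
  have hsol : ∀ t ≥ (0 : ℝ), HasDerivWithinAt (Eigen.solution f Q x0)
      (Eigen.field f Q (Eigen.solution f Q x0 t)) (Ici 0) t := fun t ht =>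
    (Eigen.hasDerivAt_solution hf hQ0 hQ1 hx0 ht).hasDerivWithinAt
  refine ⟨Eigen.solution f Q x0, ⟨Eigen.solution_zero hx0.2,
    fun t ht => hasDerivWithinAt_pi.1 (hsol t ht),
    fun t ht => Eigen.solution_mem_stdSimplex hf hQ0 hx0 ht⟩, fun y hy0 hy t ht => ?_⟩
  exact ODE_solution_unique_Ici_of_contDiff Eigen.contDiff_field
    (fun t ht => hasDerivWithinAt_pi.2 (hy t ht)) hsol
    (hy0.trans (Eigen.solution_zero hx0.2).symm) ht

/-- Existence and uniqueness for Eigen's model: for every `x⁰` in the unit simplex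
there is a unique solution on `[0,∞)` of Eigen's equations with `x(0) = x⁰`,
and the solution remains in the simplex. -/
theorem eigen_model_existence_uniqueness
    (N : ℕ) (hN : 1 ≤ N) (f : Fin N → ℝ) (hf : ∀ j, 0 ≤ f j)
    (Q : Fin N → Fin N → ℝ) (hQ0 : ∀ i j, 0 ≤ Q i j) (hQ1 : ∀ i, ∑ j, Q i j = 1)
    (x0 : Fin N → ℝ) (hx0 : (∀ i, 0 ≤ x0 i) ∧ ∑ i, x0 i = 1) :
    ∃ x : ℝ → Fin N → ℝ,
      (x 0 = x0 ∧
       (∀ t ≥ (0 : ℝ), ∀ i, HasDerivWithinAt (fun s => x s i)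
         (∑ j, f j * Q j i * x t j - x t i * ∑ j, f j * x t j) (Set.Ici 0) t) ∧
       (∀ t ≥ (0 : ℝ), (∀ i, 0 ≤ x t i) ∧ ∑ i, x t i = 1)) ∧
      (∀ y : ℝ → Fin N → ℝ,
        y 0 = x0 →
        (∀ t ≥ (0 : ℝ), ∀ i, HasDerivWithinAt (fun s => y s i)
          (∑ j, f j * Q j i * y t j - y t i * ∑ j, f j * y t j) (Set.Ici 0) t) →
        ∀ t ≥ (0 : ℝ), y t = x t) :=
  eigen_model_existence_uniqueness_general N f hf Q hQ0 hQ1 x0 hx0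
end
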